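/- arXiv:2106.15682 — 2 statements merged into one kernel-verified Lean document; each statement's English description precedes it below -/
import Mathlib

section
/- Assume X ∈ ℝ^{n×p} has full column rank (p ≤ n) and Σ ∈ ℝ^{p×p} is symmetric positive definite. For s ≤ p, let U ∈ ℝ^{p×s} have full column rank and set Z = XU. Then s/2 + (n/2)·tr((ZᵀZ)^{-1} Uᵀ Σ U) ≤ p/2 + (n/2)·tr((XᵀX)^{-1} Σ), i.e. df_R(Z) ≤ df_R(X), and equality holds if and only if s = p. -/
/-!
Write `A = XᵀX` and `P = U (UᵀAU)⁻¹ Uᵀ`. The trace term of `Z = XU` is `tr (P Σ)`, and since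
`PAP = P` one has `A⁻¹ - P = (1 - PA) A⁻¹ (1 - PA)ᵀ`, which is positive semidefinite. The trace
of a product of positive semidefinite matrices is nonnegative, so `tr (P Σ) ≤ tr (A⁻¹ Σ)`.
Adding `s / 2 ≤ p / 2` gives the inequality, strict when `s < p`; when `s = p` the matrix `U`
is invertible and the two trace terms coincide.
-/

open Matrix
open scoped MatrixOrder

namespace Matrix

theorem mulVec_injective_of_rank_eq_card {m n K : Type*} [Fintype n] [Field K] {A : Matrix m n K}
    (hA : A.rank = Fintype.card n) : Function.Injective A.mulVec := by
  rw [mulVec_injective_iff, linearIndependent_iff_card_eq_finrank_span, ← hA,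
    rank_eq_finrank_span_cols, Set.finrank]

theorem PosSemidef.trace_mul_nonneg {n : Type*} [Fintype n] {A B : Matrix n n ℝ}
    (hA : A.PosSemidef) (hB : B.PosSemidef) : 0 ≤ (A * B).trace := by
  classical
  obtain ⟨C, rfl⟩ := CStarAlgebra.nonneg_iff_eq_star_mul_self.mp hB.nonneg
  rw [← Matrix.mul_assoc, trace_mul_cycle]
  exact (hA.mul_mul_conjTranspose_same C).trace_nonneg

theorem PosDef.isUnit_det {n K : Type*} [Fintype n] [DecidableEq n] [Field K] [PartialOrder K]
    [StarRing K] {M : Matrix n n K} (hM : M.PosDef) : IsUnit M.det :=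
  (isUnit_iff_isUnit_det M).mp hM.isUnit

section

variable {n k : Type*} [Fintype n] [Fintype k] [DecidableEq n] [DecidableEq k]

theorem PosDef.posSemidef_inv_sub_compression {A : Matrix n n ℝ} (hA : A.PosDef)
    {U : Matrix n k ℝ} (hU : Function.Injective U.mulVec) :
    (A⁻¹ - U * (Uᵀ * A * U)⁻¹ * Uᵀ).PosSemidef := by
  set G := Uᵀ * A * U
  set P := U * G⁻¹ * Uᵀ
  have hG : G.PosDef := by simpa using hA.conjTranspose_mul_mul_same hU
  have hAt : Aᵀ = A := by simpa using hA.isHermitian.eq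
  have hGt : Gᵀ = G := by simpa using hG.isHermitian.eq
  have hPt : Pᵀ = P := by
    simp only [P, transpose_mul, transpose_transpose, transpose_nonsing_inv, hGt, Matrix.mul_assoc]
  have hPAP : P * A * P = P := by
    calc P * A * P = U * G⁻¹ * G * G⁻¹ * Uᵀ := by simp only [P, G, Matrix.mul_assoc]
      _ = P := by rw [nonsing_inv_mul_cancel_right G _ hG.isUnit_det]
  have hfactor : A⁻¹ - P = (1 - P * A) * A⁻¹ * (1 - P * A)ᵀ := by
    rw [transpose_sub, transpose_one, transpose_mul, hAt, hPt]
    simp only [Matrix.sub_mul, Matrix.mul_sub, Matrix.one_mul, Matrix.mul_one,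
      mul_nonsing_inv_cancel_right A _ hA.isUnit_det, nonsing_inv_mul_cancel_left A _ hA.isUnit_det]
    rw [← Matrix.mul_assoc, hPAP]
    abel
  rw [hfactor]
  simpa only [conjTranspose_eq_transpose_of_trivial] using
    hA.inv.posSemidef.mul_mul_conjTranspose_same (1 - P * A)

theorem PosDef.trace_inv_compression_mul_le {A S : Matrix n n ℝ} (hA : A.PosDef)
    (hS : S.PosSemidef) {U : Matrix n k ℝ} (hU : Function.Injective U.mulVec) :
    ((Uᵀ * A * U)⁻¹ * (Uᵀ * S * U)).trace ≤ (A⁻¹ * S).trace := by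
  have hcycle :
      ((Uᵀ * A * U)⁻¹ * (Uᵀ * S * U)).trace = (U * (Uᵀ * A * U)⁻¹ * Uᵀ * S).trace := by
    simp only [Matrix.mul_assoc]
    rw [trace_mul_comm U]
    simp only [Matrix.mul_assoc]
  have hgap := (hA.posSemidef_inv_sub_compression hU).trace_mul_nonneg hS
  rw [Matrix.sub_mul, trace_sub] at hgap
  linarith

end

theorem trace_inv_compression_mul_of_isUnit {n R : Type*} [Fintype n] [DecidableEq n]
    [CommRing R] (A S : Matrix n n R) {U : Matrix n n R} (hU : IsUnit U.det) :
    ((Uᵀ * A * U)⁻¹ * (Uᵀ * S * U)).trace = (A⁻¹ * S).trace := by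
  have hUt : IsUnit Uᵀ.det := by rwa [det_transpose]
  rw [Matrix.mul_inv_rev, Matrix.mul_inv_rev]
  simp only [Matrix.mul_assoc]
  rw [nonsing_inv_mul_cancel_left _ _ hUt, trace_mul_comm]
  simp only [Matrix.mul_assoc]
  rw [mul_nonsing_inv _ hU, Matrix.mul_one]

end Matrix

theorem dfR_linear_combination_le_general
    {n p s : ℕ} (hsp : s ≤ p)
    (X : Matrix (Fin n) (Fin p) ℝ) (hX : X.rank = p)
    (Sig : Matrix (Fin p) (Fin p) ℝ) (hSigpd : Sig.PosDef)
    (U : Matrix (Fin p) (Fin s) ℝ) (hU : U.rank = s) :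
    ((s : ℝ) / 2 + ((n : ℝ) / 2) *
        ((((X * U)ᵀ * (X * U))⁻¹ * (Uᵀ * Sig * U)).trace) ≤
      (p : ℝ) / 2 + ((n : ℝ) / 2) * (((Xᵀ * X)⁻¹ * Sig).trace)) ∧
    ((s : ℝ) / 2 + ((n : ℝ) / 2) *
        ((((X * U)ᵀ * (X * U))⁻¹ * (Uᵀ * Sig * U)).trace) =
      (p : ℝ) / 2 + ((n : ℝ) / 2) * (((Xᵀ * X)⁻¹ * Sig).trace) ↔ s = p) := by
  have hXinj : Function.Injective X.mulVec := mulVec_injective_of_rank_eq_card (by simpa using hX)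
  have hUinj : Function.Injective U.mulVec := mulVec_injective_of_rank_eq_card (by simpa using hU)
  have hA : (Xᵀ * X).PosDef := by simpa using PosDef.conjTranspose_mul_self X hXinj
  have hgram : (X * U)ᵀ * (X * U) = Uᵀ * (Xᵀ * X) * U := by
    simp only [transpose_mul, Matrix.mul_assoc]
  rw [hgram]
  have htrace := hA.trace_inv_compression_mul_le hSigpd.posSemidef hUinj
  have hscaled := mul_le_mul_of_nonneg_left htrace (by positivity : (0 : ℝ) ≤ n / 2)
  have hsp' : (s : ℝ) ≤ p := by exact_mod_cast hsp
  refine ⟨by linarith, fun heq => ?_, ?_⟩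
  · exact_mod_cast le_antisymm hsp' (by linarith)
  · rintro rfl
    have hUunit : IsUnit U.det :=
      (isUnit_iff_isUnit_det U).mp (mulVec_injective_iff_isUnit.mp hUinj)
    rw [trace_inv_compression_mul_of_isUnit _ _ hUunit]

/-- For a full-column-rank design `X` and a full-column-rank coefficient
matrix `U`, the predictive model degrees of freedom of the ordinary least squares model
on `Z = XU` is at most that of `X`, with equality iff `s = p`. -/
theorem dfR_linear_combination_le
    {n p s : ℕ} (hpn : p ≤ n) (hsp : s ≤ p)
    (X : Matrix (Fin n) (Fin p) ℝ) (hX : X.rank = p)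
    (Sig : Matrix (Fin p) (Fin p) ℝ) (hSig : Sig.IsSymm) (hSigpd : Sig.PosDef)
    (U : Matrix (Fin p) (Fin s) ℝ) (hU : U.rank = s) :
    ((s : ℝ) / 2 + ((n : ℝ) / 2) *
        ((((X * U)ᵀ * (X * U))⁻¹ * (Uᵀ * Sig * U)).trace) ≤
      (p : ℝ) / 2 + ((n : ℝ) / 2) * (((Xᵀ * X)⁻¹ * Sig).trace)) ∧
    ((s : ℝ) / 2 + ((n : ℝ) / 2) *
        ((((X * U)ᵀ * (X * U))⁻¹ * (Uᵀ * Sig * U)).trace) =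
      (p : ℝ) / 2 + ((n : ℝ) / 2) * (((Xᵀ * X)⁻¹ * Sig).trace) ↔ s = p) :=
  dfR_linear_combination_le_general hsp X hX Sig hSigpd U hU
end

section
/- Let X ∈ ℝ^{n×p} have full row rank with n < p, let P = Xᵀ(XXᵀ)^{-1}X (the orthogonal projection onto the row space of X), let F ∈ ℝ^{p×n}, and let Σ ∈ ℝ^{p×p} be symmetric positive semidefinite. Set G = Fᵀ(I_p − P) + (XXᵀ)^{-1}X ∈ ℝ^{n×p}. Then the predictive model degrees of freedom of the gradient-descent interpolating model with initialization β^{(0)} = Fy equals n/2 + (n/2)·tr(GᵀGΣ). Moreover, if Σ = I_p, then tr(GᵀG) ≥ tr(Xᵀ(XXᵀ)^{-2}X), with equality if and only if (I_p − P)F = 0 (i.e., the limiting model coincides with the minimum-norm least squares model). Hence df_R(β^{(∞)}) ≥ df_R(β̂) when Σ = I_p. -/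
/-!
Writing `∑ᵢ (G x)ᵢ²` as the quadratic form `xᵀ (GᵀG) x` and integrating term by term against the
second moments of `x*` gives `E‖G x*‖² = tr(GᵀGΣ)`.

For the comparison, the two summands of `G = Fᵀ(I − P) + (XXᵀ)⁻¹X` have mutually orthogonal rows,
because `(I − P)Xᵀ = 0`. Hence `tr(GᵀG)` splits as `‖(I − P)F‖²_F + tr(Xᵀ(XXᵀ)⁻²X)`, and the
Frobenius norm is nonnegative and vanishes exactly when `(I − P)F = 0`.
-/

open Matrix MeasureTheory

theorem integral_dotProduct_mulVec {Ω ι : Type*} [MeasurableSpace Ω] {μ : Measure Ω} [Fintype ι]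
    (A : Matrix ι ι ℝ) {x : Ω → ι → ℝ} (hx : ∀ i, MemLp (fun ω => x ω i) 2 μ)
    {S : Matrix ι ι ℝ} (hS : ∀ i j, ∫ ω, x ω i * x ω j ∂μ = S i j) :
    ∫ ω, x ω ⬝ᵥ (A *ᵥ x ω) ∂μ = (Aᵀ * S).trace := by
  have hint : ∀ i j, Integrable (fun ω => A i j * (x ω i * x ω j)) μ :=
    fun i j => ((hx i).integrable_mul (hx j)).const_mul _
  have hexpand : ∀ ω, x ω ⬝ᵥ (A *ᵥ x ω) = ∑ i, ∑ j, A i j * (x ω i * x ω j) := fun ω => by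
    simp only [dotProduct, mulVec, Finset.mul_sum]
    exact Finset.sum_congr rfl fun i _ => Finset.sum_congr rfl fun j _ => by ring
  simp_rw [hexpand]
  rw [integral_finsetSum _ fun i _ => integrable_finsetSum _ fun j _ => hint i j]
  simp_rw [integral_finsetSum _ fun j _ => hint _ j, integral_const_mul, hS]
  simp only [trace, diag_apply, mul_apply, transpose_apply]
  exact Finset.sum_comm

theorem integral_sum_sq_mulVec {Ω ι κ : Type*} [MeasurableSpace Ω] {μ : Measure Ω} [Fintype ι]
    [Fintype κ] (G : Matrix κ ι ℝ) {x : Ω → ι → ℝ} (hx : ∀ i, MemLp (fun ω => x ω i) 2 μ)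
    {S : Matrix ι ι ℝ} (hS : ∀ i j, ∫ ω, x ω i * x ω j ∂μ = S i j) :
    ∫ ω, ∑ k, (G *ᵥ x ω) k ^ 2 ∂μ = (Gᵀ * G * S).trace := by
  have hsq : ∀ ω, ∑ k, (G *ᵥ x ω) k ^ 2 = x ω ⬝ᵥ ((Gᵀ * G) *ᵥ x ω) := fun ω => by
    rw [← mulVec_mulVec, dotProduct_mulVec, vecMul_transpose]
    simp only [dotProduct, sq]
  simp_rw [hsq]
  rw [integral_dotProduct_mulVec _ hx hS, transpose_mul, transpose_transpose]

namespace Matrix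

theorem isUnit_of_rank_eq_card {m K : Type*} [Fintype m] [DecidableEq m] [Field K]
    {A : Matrix m m K} (h : A.rank = Fintype.card m) : IsUnit A :=
  linearIndependent_rows_iff_isUnit.1 <|
    linearIndependent_iff_card_eq_finrank_span.2 (by rw [← h, rank_eq_finrank_span_row]; rfl)

theorem isUnit_mul_transpose_of_rank_eq_card {m n : Type*} [Fintype m] [Fintype n]
    [DecidableEq m] {X : Matrix m n ℝ} (hX : X.rank = Fintype.card m) : IsUnit (X * Xᵀ) :=
  isUnit_of_rank_eq_card (by rw [rank_self_mul_transpose, hX])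

theorem trace_mul_transpose_self_eq_zero_iff {m n : Type*} [Fintype m]
    [Fintype n] {A : Matrix m n ℝ} : (A * Aᵀ).trace = 0 ↔ A = 0 := by
  simpa using trace_mul_conjTranspose_self_eq_zero_iff (A := A)

theorem trace_transpose_mul_add_of_mul_transpose_eq_zero {m n R : Type*} [Fintype m] [Fintype n]
    [CommRing R] {M N : Matrix m n R} (h : M * Nᵀ = 0) :
    ((M + N)ᵀ * (M + N)).trace = (Mᵀ * M).trace + (Nᵀ * N).trace := by
  have hMN : (Mᵀ * N).trace = 0 := by
    rw [trace_mul_comm, ← trace_transpose, transpose_mul, transpose_transpose, h, trace_zero]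
  have hNM : (Nᵀ * M).trace = 0 := by rw [trace_mul_comm, h, trace_zero]
  rw [transpose_add, Matrix.add_mul, Matrix.mul_add, Matrix.mul_add, trace_add, trace_add,
    trace_add, hMN, hNM]
  ring

variable {m n R : Type*} [Fintype m] [Fintype n] [DecidableEq m] [CommRing R] (X : Matrix m n R)

theorem transpose_inv_mul_transpose_self : ((X * Xᵀ)⁻¹)ᵀ = (X * Xᵀ)⁻¹ := by
  rw [transpose_nonsing_inv, transpose_mul, transpose_transpose]

theorem transpose_transpose_mul_inv_mul :
    (Xᵀ * (X * Xᵀ)⁻¹ * X)ᵀ = Xᵀ * (X * Xᵀ)⁻¹ * X := by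
  rw [transpose_mul, transpose_mul, transpose_transpose, transpose_inv_mul_transpose_self,
    Matrix.mul_assoc]

variable [DecidableEq n]

theorem one_sub_transpose_mul_inv_mul_mul_transpose (hX : IsUnit (X * Xᵀ)) :
    (1 - Xᵀ * (X * Xᵀ)⁻¹ * X) * Xᵀ = 0 := by
  rw [Matrix.sub_mul, Matrix.one_mul, Matrix.mul_assoc, Matrix.mul_assoc,
    nonsing_inv_mul _ ((isUnit_iff_isUnit_det _).1 hX), Matrix.mul_one, sub_self]

theorem trace_transpose_mul_self_add_inv_mul (hX : IsUnit (X * Xᵀ)) (F : Matrix n m R) :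
    ((Fᵀ * (1 - Xᵀ * (X * Xᵀ)⁻¹ * X) + (X * Xᵀ)⁻¹ * X)ᵀ *
        (Fᵀ * (1 - Xᵀ * (X * Xᵀ)⁻¹ * X) + (X * Xᵀ)⁻¹ * X)).trace =
      ((1 - Xᵀ * (X * Xᵀ)⁻¹ * X) * F * ((1 - Xᵀ * (X * Xᵀ)⁻¹ * X) * F)ᵀ).trace +
        (Xᵀ * (X * Xᵀ)⁻¹ ^ 2 * X).trace := by
  have hQ : (1 - Xᵀ * (X * Xᵀ)⁻¹ * X)ᵀ = 1 - Xᵀ * (X * Xᵀ)⁻¹ * X := by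
    rw [transpose_sub, transpose_one, transpose_transpose_mul_inv_mul]
  rw [trace_transpose_mul_add_of_mul_transpose_eq_zero]
  · simp only [transpose_mul, transpose_transpose, hQ, transpose_inv_mul_transpose_self]
    simp only [sq, Matrix.mul_assoc]
  · rw [transpose_mul, ← Matrix.mul_assoc, Matrix.mul_assoc Fᵀ,
      one_sub_transpose_mul_inv_mul_mul_transpose X hX, Matrix.mul_zero, Matrix.zero_mul]

end Matrix

theorem dfR_gradient_descent_interpolant_general
    {Ω : Type*} [MeasurableSpace Ω] (P' : Measure Ω)
    {n p : ℕ}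
    (X : Matrix (Fin n) (Fin p) ℝ) (hX : X.rank = n)
    (P : Matrix (Fin p) (Fin p) ℝ) (hP : P = Xᵀ * (X * Xᵀ)⁻¹ * X)
    (F : Matrix (Fin p) (Fin n) ℝ)
    (Sig : Matrix (Fin p) (Fin p) ℝ)
    (G : Matrix (Fin n) (Fin p) ℝ)
    (hG : G = Fᵀ * (1 - P) + (X * Xᵀ)⁻¹ * X)
    (xstar : Ω → Fin p → ℝ)
    (hxL2 : ∀ i, MemLp (fun ω => xstar ω i) 2 P')
    (hxmom : ∀ i j, ∫ ω, xstar ω i * xstar ω j ∂P' = Sig i j) :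
    ((n : ℝ) / 2 + ((n : ℝ) / 2) * ∫ ω, ∑ i, ((G *ᵥ xstar ω) i) ^ 2 ∂P' =
        (n : ℝ) / 2 + ((n : ℝ) / 2) * (Gᵀ * G * Sig).trace) ∧
      (Sig = 1 →
        ((Xᵀ * (X * Xᵀ)⁻¹ ^ 2 * X).trace ≤ (Gᵀ * G).trace ∧
          ((Gᵀ * G).trace = (Xᵀ * (X * Xᵀ)⁻¹ ^ 2 * X).trace ↔ (1 - P) * F = 0) ∧
          (n : ℝ) / 2 + ((n : ℝ) / 2) * (Xᵀ * (X * Xᵀ)⁻¹ ^ 2 * X).trace ≤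
            (n : ℝ) / 2 + ((n : ℝ) / 2) * (Gᵀ * G).trace)) := by
  subst hP
  have hU : IsUnit (X * Xᵀ) := isUnit_mul_transpose_of_rank_eq_card (by simpa using hX)
  have hsplit := hG ▸ trace_transpose_mul_self_add_inv_mul X hU F
  have hres := (posSemidef_self_mul_conjTranspose ((1 - Xᵀ * (X * Xᵀ)⁻¹ * X) * F)).trace_nonneg
  simp only [conjTranspose_eq_transpose_of_trivial] at hres
  have hle : (Xᵀ * (X * Xᵀ)⁻¹ ^ 2 * X).trace ≤ (Gᵀ * G).trace := by linarith
  refine ⟨by rw [integral_sum_sq_mulVec G hxL2 hxmom], fun _ => ⟨hle, ?_, by gcongr⟩⟩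
  rw [hsplit, add_eq_right, trace_mul_transpose_self_eq_zero_iff]

/-- For the gradient-descent interpolating model with data-dependent
initialization `β^{(0)} = Fy`, whose hat vector is `h(x) = Gx` with
`G = Fᵀ(I_p − P) + (XXᵀ)⁻¹X`, the predictive model degrees of freedom equals
`n/2 + (n/2)·tr(GᵀGΣ)`; and when `Σ = I_p` it is at least that of the minimum-norm
least squares model, with equality iff `(I_p − P)F = 0`. -/
theorem dfR_gradient_descent_interpolant
    {Ω : Type*} [MeasurableSpace Ω] (P' : Measure Ω) [IsProbabilityMeasure P']
    {n p : ℕ} (hnp : n < p)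
    (X : Matrix (Fin n) (Fin p) ℝ) (hX : X.rank = n)
    (P : Matrix (Fin p) (Fin p) ℝ) (hP : P = Xᵀ * (X * Xᵀ)⁻¹ * X)
    (F : Matrix (Fin p) (Fin n) ℝ)
    (Sig : Matrix (Fin p) (Fin p) ℝ) (hSig : Sig.PosSemidef)
    (G : Matrix (Fin n) (Fin p) ℝ)
    (hG : G = Fᵀ * (1 - P) + (X * Xᵀ)⁻¹ * X)
    (xstar : Ω → Fin p → ℝ) (hxmeas : Measurable xstar)
    (hxL2 : ∀ i, MemLp (fun ω => xstar ω i) 2 P')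
    (hxmom : ∀ i j, ∫ ω, xstar ω i * xstar ω j ∂P' = Sig i j) :
    ((n : ℝ) / 2 + ((n : ℝ) / 2) * ∫ ω, ∑ i, ((G *ᵥ xstar ω) i) ^ 2 ∂P' =
        (n : ℝ) / 2 + ((n : ℝ) / 2) * (Gᵀ * G * Sig).trace) ∧
      (Sig = 1 →
        ((Xᵀ * (X * Xᵀ)⁻¹ ^ 2 * X).trace ≤ (Gᵀ * G).trace ∧
          ((Gᵀ * G).trace = (Xᵀ * (X * Xᵀ)⁻¹ ^ 2 * X).trace ↔ (1 - P) * F = 0) ∧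
          (n : ℝ) / 2 + ((n : ℝ) / 2) * (Xᵀ * (X * Xᵀ)⁻¹ ^ 2 * X).trace ≤
            (n : ℝ) / 2 + ((n : ℝ) / 2) * (Gᵀ * G).trace)) :=
  dfR_gradient_descent_interpolant_general P' X hX P hP F Sig G hG xstar hxL2 hxmom
end
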